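/- arXiv:1105.5895 — 4 statements merged into one kernel-verified Lean document; each statement's English description precedes it below -/
import Mathlib

section
/- Fix an SIR threshold T > 0 and a signal attenuation function g : [0,∞) → ℝ that is nonincreasing and strictly positive. Let C : ℕ → ℕ satisfy C(n) ≥ 1 for all n and C(n)/log n → 0 as n → ∞ (sub-logarithmically many colors). Then for EVERY sequence of measurable maps χ_n from configurations (x_1,…,x_n) ∈ ([0,1]²)^n to colorings χ : {1,…,n} → {1,…,C(n)}, if X_1,…,X_n are independent and uniformly distributed on the unit square [0,1]², the probability that the colored SIR digraph of (X_1,…,X_n) with coloring χ_n(X_1,…,X_n) is connected tends to 0 as n → ∞. -/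
open MeasureTheory Filter

noncomputable section

/-- The closed unit square `[0,1]² ⊂ ℝ²`. -/
def unitSquare : Set (EuclideanSpace ℝ (Fin 2)) :=
  {p | ∀ i, p i ∈ Set.Icc (0 : ℝ) 1}

/-- Edge relation of the colored SIR digraph with attenuation function `g`: there is an
edge from `i` to `j` iff `i ≠ j` and the signal power `g(‖x_i - x_j‖)` is at least `T`
times the interference `Σ_{k ≠ i, χ(k) = χ(i)} g(‖x_k - x_j‖)`. -/
def sirEdgeG (g : ℝ → ℝ) (T : ℝ) {n : ℕ} (x : Fin n → EuclideanSpace ℝ (Fin 2))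
    (χ : Fin n → ℕ) (i j : Fin n) : Prop :=
  i ≠ j ∧
    T * ∑ k ∈ Finset.univ.filter fun k => k ≠ i ∧ χ k = χ i,
        g (dist (x k) (x j)) ≤
      g (dist (x i) (x j))

/-- The colored SIR digraph is connected: between every ordered pair of distinct vertices
there is a directed path. -/
def sirConnectedG (g : ℝ → ℝ) (T : ℝ) {n : ℕ} (x : Fin n → EuclideanSpace ℝ (Fin 2))
    (χ : Fin n → ℕ) : Prop :=
  ∀ i j : Fin n, i ≠ j → Relation.TransGen (sirEdgeG g T x χ) i j

lemma unitSquare_closed : IsClosed unitSquare := by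
  have : unitSquare = ⋂ i : Fin 2, (fun p : EuclideanSpace ℝ (Fin 2) => p i) ⁻¹' Set.Icc 0 1 := by
    ext p; simp [unitSquare, Set.mem_iInter]
  rw [this]
  exact isClosed_iInter fun i =>
    isClosed_Icc.preimage (EuclideanSpace.proj (𝕜 := ℝ) i).continuous

lemma dist_le_two_of_mem_unitSquare {p q : EuclideanSpace ℝ (Fin 2)}
    (hp : p ∈ unitSquare) (hq : q ∈ unitSquare) : dist p q ≤ 2 := by
  rw [EuclideanSpace.dist_eq]
  have h : ∑ i, dist (p i) (q i) ^ 2 ≤ 4 := by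
    have hb : ∀ i : Fin 2, dist (p i) (q i) ^ 2 ≤ 1 := by
      intro i
      have h1 : |p i - q i| ≤ 1 := by
        have := hp i; have := hq i
        rw [abs_le]
        constructor <;> simp at * <;> linarith
      have : dist (p i) (q i) ≤ 1 := by rwa [Real.dist_eq]
      nlinarith [dist_nonneg (x := p i) (y := q i)]
    calc ∑ i, dist (p i) (q i) ^ 2 ≤ ∑ _i : Fin 2, (1:ℝ) :=
          Finset.sum_le_sum fun i _ => hb i
      _ ≤ 4 := by simp; norm_num
  calc Real.sqrt (∑ i, dist (p i) (q i) ^ 2) ≤ Real.sqrt 4 := Real.sqrt_le_sqrt h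
    _ = 2 := by rw [show (4:ℝ) = 2^2 by norm_num, Real.sqrt_sq (by norm_num)]

lemma no_conn (T : ℝ) (hT : 0 < T) (g : ℝ → ℝ)
    (hg_anti : AntitoneOn g (Set.Ici 0)) (hg_pos : ∀ r : ℝ, 0 ≤ r → 0 < g r)
    {n C' m : ℕ} (hn : 2 ≤ n) (hm1 : 1 ≤ m) (hC1 : 1 ≤ C') (hmn : C' * m ≤ n)
    (x : Fin n → EuclideanSpace ℝ (Fin 2)) (hx : ∀ i, x i ∈ unitSquare)
    (χ' : Fin n → ℕ) (hr : ∀ i, χ' i ∈ Finset.Icc 1 C')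
    (hgap : g 0 < T * ((m - 1 : ℕ) : ℝ) * g 2) : ¬ sirConnectedG g T x χ' := by
  intro hconn
  -- pigeonhole: some color class has at least m elements
  obtain ⟨c, _, hc⟩ := Finset.exists_le_card_fiber_of_mul_le_card_of_maps_to
    (s := Finset.univ) (t := Finset.Icc 1 C') (f := χ') (fun a _ => hr a)
    ⟨1, by simp [hC1]⟩ (by simpa using hmn)
  have hfib_ne : ({k ∈ Finset.univ | χ' k = c} : Finset (Fin n)).Nonempty :=
    Finset.card_pos.mp (lt_of_lt_of_le hm1 hc)
  obtain ⟨i, hi⟩ := hfib_ne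
  have hχi : χ' i = c := (Finset.mem_filter.mp hi).2
  have : Nontrivial (Fin n) := Fin.nontrivial_iff_two_le.mpr hn
  obtain ⟨j, hj⟩ := exists_ne i
  obtain ⟨b, hb, -⟩ := Relation.TransGen.head'_iff.mp (hconn i j (Ne.symm hj))
  obtain ⟨-, hedge⟩ := hb
  -- lower bound on the interference sum
  set s : Finset (Fin n) := Finset.univ.filter fun k => k ≠ i ∧ χ' k = χ' i with hs
  have hsub' : ({k ∈ Finset.univ | χ' k = c} : Finset (Fin n)).erase i ⊆ s := by
    intro k hk
    rw [Finset.mem_erase] at hk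
    simp only [hs, Finset.mem_filter, Finset.mem_univ, true_and]
    exact ⟨hk.1, (Finset.mem_filter.mp hk.2).2.trans hχi.symm⟩
  have hcard : m - 1 ≤ s.card := by
    calc m - 1 ≤ ({k ∈ Finset.univ | χ' k = c} : Finset (Fin n)).card - 1 := by omega
      _ = (({k ∈ Finset.univ | χ' k = c} : Finset (Fin n)).erase i).card := by
          rw [Finset.card_erase_of_mem hi]
      _ ≤ s.card := Finset.card_le_card hsub'
  have hterm : ∀ k ∈ s, g 2 ≤ g (dist (x k) (x b)) := by
    intro k _
    exact hg_anti (Set.mem_Ici.mpr dist_nonneg) (by norm_num)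
      (dist_le_two_of_mem_unitSquare (hx k) (hx b))
  have hsum : ((m - 1 : ℕ) : ℝ) * g 2 ≤ ∑ k ∈ s, g (dist (x k) (x b)) := by
    calc ((m - 1 : ℕ) : ℝ) * g 2 ≤ (s.card : ℝ) * g 2 := by
          have := hg_pos 2 (by norm_num)
          have : ((m - 1 : ℕ) : ℝ) ≤ (s.card : ℝ) := by exact_mod_cast hcard
          nlinarith [hg_pos 2 (by norm_num : (0:ℝ) ≤ 2)]
      _ ≤ ∑ k ∈ s, g (dist (x k) (x b)) := by
          simpa using Finset.card_nsmul_le_sum s _ _ hterm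
  have hub : g (dist (x i) (x b)) ≤ g 0 :=
    hg_anti (Set.mem_Ici.mpr le_rfl) (Set.mem_Ici.mpr dist_nonneg) dist_nonneg
  have : T * (((m - 1 : ℕ) : ℝ) * g 2) ≤ g 0 :=
    le_trans (le_trans (by nlinarith) hedge) hub
  nlinarith

/-- Fix a threshold `T > 0` and a nonincreasing, strictly positive
attenuation function `g : [0,∞) → ℝ`.  If the number of colors `C n ≥ 1` is sub-logarithmic
in `n`, then for every sequence of measurable coloring maps `χ n` using colors
`1, …, C n`, the probability that the colored SIR digraph of `n` i.i.d. uniform points on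
the unit square is connected tends to `0` as `n → ∞`. -/
theorem stmt_1 (T : ℝ) (hT : 0 < T) (g : ℝ → ℝ)
    (hg_anti : AntitoneOn g (Set.Ici 0)) (hg_pos : ∀ r : ℝ, 0 ≤ r → 0 < g r)
    (C : ℕ → ℕ) (hC : ∀ n, 1 ≤ C n)
    (hsub : Tendsto (fun n : ℕ => (C n : ℝ) / Real.log n) atTop (nhds 0))
    (χ : (n : ℕ) → (Fin n → EuclideanSpace ℝ (Fin 2)) → (Fin n → ℕ))
    (hmeas : ∀ n, Measurable (χ n))
    (hrange : ∀ (n : ℕ) (x) (i), χ n x i ∈ Finset.Icc 1 (C n)) :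
    Tendsto
      (fun n : ℕ =>
        Measure.pi (fun _ : Fin n => volume.restrict unitSquare)
          {x | sirConnectedG g T x (χ n x)})
      atTop (nhds 0) := by
  set m : ℕ := ⌈g 0 / (T * g 2)⌉₊ + 2 with hm
  have hg2 : 0 < g 2 := hg_pos 2 (by norm_num)
  have hTg2 : 0 < T * g 2 := mul_pos hT hg2
  have hgap : g 0 < T * ((m - 1 : ℕ) : ℝ) * g 2 := by
    have h1 : g 0 / (T * g 2) ≤ (⌈g 0 / (T * g 2)⌉₊ : ℝ) := Nat.le_ceil _
    have h2 : ((m - 1 : ℕ) : ℝ) = (⌈g 0 / (T * g 2)⌉₊ : ℝ) + 1 := by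
      rw [show m - 1 = ⌈g 0 / (T * g 2)⌉₊ + 1 from by omega]; push_cast; ring
    rw [h2]
    have := (div_le_iff₀ hTg2).mp h1
    nlinarith
  have hm1 : (1 : ℝ) / m > 0 := by positivity
  have hev : ∀ᶠ n : ℕ in atTop,
      Measure.pi (fun _ : Fin n => volume.restrict unitSquare)
        {x | sirConnectedG g T x (χ n x)} = 0 := by
    filter_upwards [hsub.eventually_lt_const hm1, eventually_ge_atTop 3] with n hlt hn3
    have hlog : 0 < Real.log n := Real.log_pos (by exact_mod_cast by omega)
    have hmn : C n * m ≤ n := by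
      have h1 : (C n : ℝ) * m < Real.log n := by
        rw [div_lt_div_iff₀ hlog (by positivity)] at hlt
        linarith
      have h2 : Real.log n < n := by
        have := Real.log_lt_sub_one_of_pos (by positivity : (0:ℝ) < (n:ℝ))
          (by exact_mod_cast by omega : (n:ℝ) ≠ 1)
        linarith
      have : ((C n * m : ℕ) : ℝ) < (n : ℝ) := by rw [Nat.cast_mul]; linarith
      exact_mod_cast this.le
    -- the connectivity event is contained in the null set of configs leaving the square
    have hincl : {x : Fin n → EuclideanSpace ℝ (Fin 2) | sirConnectedG g T x (χ n x)} ⊆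
        ⋃ i : Fin n, Function.eval i ⁻¹' unitSquareᶜ := by
      intro x hx
      by_contra hout
      simp only [Set.mem_iUnion, Set.mem_preimage, Set.mem_compl_iff, Function.eval,
        not_exists, not_not] at hout
      exact no_conn T hT g hg_anti hg_pos (by omega) (by omega) (hC n) hmn x hout
        (χ n x) (hrange n x) hgap hx
    refine measure_mono_null hincl (measure_iUnion_null fun i => ?_)
    rw [Set.eval_preimage, Measure.pi_pi]
    refine Finset.prod_eq_zero (Finset.mem_univ i) ?_
    rw [Function.update_self,
      Measure.restrict_apply' unitSquare_closed.measurableSet]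
    simp
  exact tendsto_const_nhds.congr' (hev.mono fun n hn => hn.symm)
end
end

section
/- Let (Ω, P) be a probability space, n a positive integer, and A_1,…,A_n and B_1,…,B_n events. Suppose there are real numbers p_1, p_2 ∈ [0,1] such that for every subset S ⊆ {1,…,n}, P(⋂_{i∈S} A_i) ≤ p_1^{|S|} and P(⋂_{i∈S} B_i) ≤ p_2^{|S|}. Then P(⋂_{i=1}^n (A_i ∪ B_i)) ≤ (√p_1 + √p_2)^n. -/
open MeasureTheory

/-- If each intersection of a subfamily of the events `A i` has probability
at most `p₁ ^ |S|`, and similarly for `B i` with `p₂`, then the probability that for every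
`i` at least one of `A i`, `B i` occurs is at most `(√p₁ + √p₂) ^ n`. -/
theorem stmt_2 {Ω : Type*} [MeasurableSpace Ω] (P : Measure Ω) [IsProbabilityMeasure P]
    (n : ℕ) (hn : 0 < n) (A B : Fin n → Set Ω)
    (hmA : ∀ i, MeasurableSet (A i)) (hmB : ∀ i, MeasurableSet (B i))
    (p₁ p₂ : ℝ) (hp₁ : p₁ ∈ Set.Icc (0 : ℝ) 1) (hp₂ : p₂ ∈ Set.Icc (0 : ℝ) 1)
    (hA : ∀ S : Finset (Fin n), (P (⋂ i ∈ S, A i)).toReal ≤ p₁ ^ S.card)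
    (hB : ∀ S : Finset (Fin n), (P (⋂ i ∈ S, B i)).toReal ≤ p₂ ^ S.card) :
    (P (⋂ i, A i ∪ B i)).toReal ≤ (Real.sqrt p₁ + Real.sqrt p₂) ^ n := by
  classical
  set C : Finset (Fin n) → Set Ω := fun S => (⋂ i ∈ S, A i) ∩ ⋂ i ∈ Sᶜ, B i with hC
  have hsub : (⋂ i, A i ∪ B i) ⊆ ⋃ S : Finset (Fin n), C S := by
    intro ω hω
    refine Set.mem_iUnion.2 ⟨Finset.univ.filter (fun i => ω ∈ A i), ?_, ?_⟩
    · simp only [Set.mem_iInter]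
      intro i hi
      exact (Finset.mem_filter.1 hi).2
    · simp only [Set.mem_iInter]
      intro i hi
      have hnA : ω ∉ A i := by
        intro hA'
        exact (Finset.mem_compl.1 hi) (Finset.mem_filter.2 ⟨Finset.mem_univ i, hA'⟩)
      rcases Set.mem_iInter.1 hω i with h | h
      · exact absurd h hnA
      · exact h
  have hle : P (⋂ i, A i ∪ B i) ≤ ∑ S : Finset (Fin n), P (C S) :=
    (measure_mono hsub).trans (measure_iUnion_fintype_le _ _)
  have hfin : ∀ S : Finset (Fin n), P (C S) ≠ ⊤ := fun S => measure_ne_top P _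
  have hterm : ∀ S : Finset (Fin n),
      (P (C S)).toReal ≤ Real.sqrt p₁ ^ S.card * Real.sqrt p₂ ^ (n - S.card) := by
    intro S
    have h1 : (P (C S)).toReal ≤ p₁ ^ S.card := by
      refine le_trans ?_ (hA S)
      exact ENNReal.toReal_mono (measure_ne_top P _) (measure_mono Set.inter_subset_left)
    have h2 : (P (C S)).toReal ≤ p₂ ^ (n - S.card) := by
      have := hB Sᶜ
      rw [Finset.card_compl, Fintype.card_fin] at this
      refine le_trans ?_ this
      exact ENNReal.toReal_mono (measure_ne_top P _) (measure_mono Set.inter_subset_right)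
    have ht0 : 0 ≤ (P (C S)).toReal := ENNReal.toReal_nonneg
    have hab : (P (C S)).toReal ^ 2 ≤ p₁ ^ S.card * p₂ ^ (n - S.card) := by
      have hb0 : 0 ≤ p₂ ^ (n - S.card) := pow_nonneg hp₂.1 _
      nlinarith
    have hu0 : 0 ≤ Real.sqrt p₁ ^ S.card * Real.sqrt p₂ ^ (n - S.card) := by positivity
    have hu2 : (Real.sqrt p₁ ^ S.card * Real.sqrt p₂ ^ (n - S.card)) ^ 2
        = p₁ ^ S.card * p₂ ^ (n - S.card) := by
      rw [mul_pow, ← pow_mul, ← pow_mul, mul_comm S.card 2, mul_comm (n - S.card) 2,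
        pow_mul, pow_mul, Real.sq_sqrt hp₁.1, Real.sq_sqrt hp₂.1]
    nlinarith [hab, hu0, ht0, hu2]
  have hsum : ∑ S : Finset (Fin n), Real.sqrt p₁ ^ S.card * Real.sqrt p₂ ^ (n - S.card)
      = (Real.sqrt p₁ + Real.sqrt p₂) ^ n := by
    rw [add_pow]
    rw [← Finset.powerset_univ, Finset.sum_powerset]
    rw [Finset.card_univ, Fintype.card_fin]
    refine Finset.sum_congr rfl fun k hk => ?_
    have : ∀ t ∈ (Finset.univ : Finset (Fin n)).powersetCard k,
        Real.sqrt p₁ ^ t.card * Real.sqrt p₂ ^ (n - t.card)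
          = Real.sqrt p₁ ^ k * Real.sqrt p₂ ^ (n - k) := by
      intro t ht
      rw [(Finset.mem_powersetCard.1 ht).2]
    rw [Finset.sum_congr rfl this, Finset.sum_const, Finset.card_powersetCard,
      Finset.card_univ, Fintype.card_fin, nsmul_eq_mul]
    ring
  calc (P (⋂ i, A i ∪ B i)).toReal ≤ (∑ S : Finset (Fin n), P (C S)).toReal :=
        ENNReal.toReal_mono (by exact ENNReal.sum_ne_top.2 fun S _ => hfin S) hle
    _ = ∑ S : Finset (Fin n), (P (C S)).toReal := ENNReal.toReal_sum fun S _ => hfin S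
    _ ≤ ∑ S : Finset (Fin n), Real.sqrt p₁ ^ S.card * Real.sqrt p₂ ^ (n - S.card) :=
        Finset.sum_le_sum fun S _ => hterm S
    _ = _ := hsum
end

section
/- Let α ≥ 2 and R > 0 be real numbers, let u, t be points of ℝ² with t ≠ u and dist(t,u) ≤ D for some D > 0, and let S be a finite set of points of ℝ² with u ∉ S such that for every integer q ≥ 1 the number of points v ∈ S with dist(v,u) < 2qR is at most 8(q−1). Then Σ_{v∈S} dist(v,u)^{−α} ≤ 8·(2R)^{−α}·Σ_{q=1}^∞ q^{−α}, and consequently, if S is nonempty, dist(t,u)^{−α} / Σ_{v∈S} dist(v,u)^{−α} ≥ (2R/D)^α / (8·Σ_{q=1}^∞ q^{−α}). -/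
/-!
Remove interferers one at a time, farthest first. Since at most `8(q-1)` of them lie within
distance `2qR`, the `k`-th nearest one (counting from `0`) is at distance at least
`2(⌊k/8⌋+1)R`; so the total interference is bounded by a sum in which each term `(2qR)^{-α}`
occurs at most eight times.
The SIR bound follows by dividing the bound `dist t u ^ (-α) ≥ D ^ (-α)` by it.
-/

open Finset

theorem sum_le_sum_range_of_card_filter_lt_le {ι M : Type*} [AddCommMonoid M] [LinearOrder M]
    [IsOrderedAddMonoid M] (s : Finset ι) (f : ι → M) (b : ℕ → M)
    (h : ∀ k, #{i ∈ s | b k < f i} ≤ k) : ∑ i ∈ s, f i ≤ ∑ k ∈ range #s, b k := by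
  classical
  induction s using Finset.induction_on_min_value f with
  | empty => simp
  | insert a s ha hmin ih =>
    have hs : ∀ k, #{i ∈ s | b k < f i} ≤ k := fun k =>
      (card_le_card (filter_subset_filter _ (subset_insert a s))).trans (h k)
    -- `a` minimises `f`, so `b #s < f a` would put all `#s + 1` points above `b #s`.
    have hfa : f a ≤ b #s := by
      by_contra! hlt
      have hall : #{i ∈ insert a s | b #s < f i} = #(insert a s) := by
        refine congrArg card (filter_true_of_mem fun x hx => ?_)
        rcases mem_insert.1 hx with rfl | hx
        exacts [hlt, hlt.trans_le (hmin x hx)]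
      have := h #s
      rw [hall, card_insert_of_notMem ha] at this
      omega
    rw [sum_insert ha, card_insert_of_notMem ha, sum_range_succ, add_comm]
    exact add_le_add (ih hs) hfa

theorem sum_range_comp_div_le_mul_tsum {g : ℕ → ℝ} (hg : ∀ q, 0 ≤ g q) (hgs : Summable g)
    {m : ℕ} (hm : 0 < m) (n : ℕ) : ∑ k ∈ range n, g (k / m) ≤ m * ∑' q, g q := by
  classical
  have hfiber : ∀ q, #{k ∈ range n | k / m = q} ≤ m := fun q => by
    refine (card_le_card fun k hk => ?_).trans
      ((Nat.card_Ico (q * m) (q * m + m)).trans_le (by omega))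
    obtain rfl := (mem_filter.1 hk).2
    exact mem_Ico.2 ⟨Nat.div_mul_le_self k m, Nat.lt_div_mul_add hm⟩
  rw [sum_comp]
  calc ∑ q ∈ (range n).image (· / m), #{k ∈ range n | k / m = q} • g q
      ≤ ∑ q ∈ (range n).image (· / m), m * g q := by
        refine sum_le_sum fun q _ => ?_
        rw [nsmul_eq_mul]
        gcongr
        · exact hg q
        · exact hfiber q
    _ ≤ ∑' q, m * g q :=
        (hgs.mul_left (m : ℝ)).sum_le_tsum _ fun q _ => mul_nonneg m.cast_nonneg (hg q)
    _ = m * ∑' q, g q := tsum_mul_left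

theorem summable_nat_succ_rpow_neg {α : ℝ} (hα : 1 < α) :
    Summable fun q : ℕ => ((q + 1 : ℕ) : ℝ) ^ (-α) :=
  (summable_nat_add_iff 1).mpr (Real.summable_nat_rpow.mpr (by linarith))

theorem sum_dist_rpow_neg_le {E : Type*} [PseudoMetricSpace E] {α r : ℝ} (hα : 1 < α)
    (hr : 0 < r) {m : ℕ} (hm : 0 < m) (u : E) (S : Finset E)
    (hS : ∀ q : ℕ, 1 ≤ q → #{v ∈ S | dist v u < q * r} ≤ m * (q - 1)) :
    ∑ v ∈ S, dist v u ^ (-α) ≤ m * r ^ (-α) * ∑' q : ℕ, ((q + 1 : ℕ) : ℝ) ^ (-α) := by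
  set ρ : ℕ → ℝ := fun k => ((k / m + 1 : ℕ) : ℝ) * r
  -- the `k`-th closest point lies in the `(k / m + 1)`-th annulus or beyond
  have hcount : ∀ k, #{v ∈ S | ρ k ^ (-α) < dist v u ^ (-α)} ≤ k := fun k => calc
    _ ≤ #{v ∈ S | dist v u < ρ k} := card_le_card <| monotone_filter_right _ fun v _ hv =>
        lt_of_not_ge fun h =>
          hv.not_ge (Real.rpow_le_rpow_of_nonpos (by positivity) h (by linarith))
    _ ≤ m * (k / m + 1 - 1) := hS _ (Nat.le_add_left 1 _)
    _ ≤ k := by simpa using Nat.mul_div_le k m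
  calc ∑ v ∈ S, dist v u ^ (-α) ≤ ∑ k ∈ range #S, ρ k ^ (-α) :=
        sum_le_sum_range_of_card_filter_lt_le S _ _ hcount
    _ = r ^ (-α) * ∑ k ∈ range #S, ((k / m + 1 : ℕ) : ℝ) ^ (-α) := by
        rw [mul_sum]
        refine sum_congr rfl fun k _ => ?_
        rw [Real.mul_rpow (by positivity) hr.le, mul_comm]
    _ ≤ r ^ (-α) * (m * ∑' q : ℕ, ((q + 1 : ℕ) : ℝ) ^ (-α)) := by
        gcongr
        exact sum_range_comp_div_le_mul_tsum (fun q => by positivity)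
          (summable_nat_succ_rpow_neg hα) hm _
    _ = m * r ^ (-α) * ∑' q : ℕ, ((q + 1 : ℕ) : ℝ) ^ (-α) := by ring

theorem stmt_8_general (α R D : ℝ) (hα : 2 ≤ α) (hR : 0 < R) (hD : 0 < D)
    (u t : EuclideanSpace ℝ (Fin 2)) (ht : t ≠ u) (htu : dist t u ≤ D)
    (S : Finset (EuclideanSpace ℝ (Fin 2)))
    (hS : ∀ q : ℕ, 1 ≤ q →
      (S.filter (fun v => dist v u < 2 * q * R)).card ≤ 8 * (q - 1)) :
    (∑ v ∈ S, dist v u ^ (-α)) ≤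
        8 * (2 * R) ^ (-α) * ∑' q : ℕ, ((q + 1 : ℕ) : ℝ) ^ (-α) ∧
      (S.Nonempty →
        (2 * R / D) ^ α / (8 * ∑' q : ℕ, ((q + 1 : ℕ) : ℝ) ^ (-α)) ≤
          dist t u ^ (-α) / ∑ v ∈ S, dist v u ^ (-α)) := by
  set T := ∑' q : ℕ, ((q + 1 : ℕ) : ℝ) ^ (-α)
  have hbound : ∑ v ∈ S, dist v u ^ (-α) ≤ 8 * (2 * R) ^ (-α) * T := by
    have := sum_dist_rpow_neg_le (by linarith : (1 : ℝ) < α) (by positivity : 0 < 2 * R)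
      (by norm_num : 0 < 8) u S fun q hq => by
        rw [mul_comm (q : ℝ), mul_right_comm]
        exact hS q hq
    exact_mod_cast this
  refine ⟨hbound, fun hne => ?_⟩
  have hfar : ∀ v ∈ S, 2 * R ≤ dist v u := by
    simpa using hS 1 le_rfl
  have hpos : 0 < ∑ v ∈ S, dist v u ^ (-α) :=
    sum_pos (fun v hv => Real.rpow_pos_of_pos ((mul_pos two_pos hR).trans_le (hfar v hv)) _) hne
  calc (2 * R / D) ^ α / (8 * T) = D ^ (-α) / (8 * (2 * R) ^ (-α) * T) := by
        rw [Real.div_rpow (by positivity) hD.le, Real.rpow_neg hD.le,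
          Real.rpow_neg (by positivity)]
        field_simp
    _ ≤ dist t u ^ (-α) / ∑ v ∈ S, dist v u ^ (-α) :=
        div_le_div₀ (by positivity)
          (Real.rpow_le_rpow_of_nonpos (dist_pos.2 ht) htu (by linarith)) hpos hbound

/-- Deterministic interference bound: if every open ball of radius `2qR`
around the receiver `u` contains at most `8(q-1)` interferers of the finite set `S`
(so in particular no interferer is within distance `2R`), then the total interference
`Σ_{v∈S} dist(v,u)^{-α}` is at most `8·(2R)^{-α}·Σ_{q≥1} q^{-α}`; consequently, if `S` is
nonempty and the transmitter `t ≠ u` is within distance `D` of `u`, the SIR is at least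
`(2R/D)^α / (8·Σ_{q≥1} q^{-α})`. -/
theorem stmt_8 (α R D : ℝ) (hα : 2 ≤ α) (hR : 0 < R) (hD : 0 < D)
    (u t : EuclideanSpace ℝ (Fin 2)) (ht : t ≠ u) (htu : dist t u ≤ D)
    (S : Finset (EuclideanSpace ℝ (Fin 2))) (huS : u ∉ S)
    (hS : ∀ q : ℕ, 1 ≤ q →
      (S.filter (fun v => dist v u < 2 * q * R)).card ≤ 8 * (q - 1)) :
    (∑ v ∈ S, dist v u ^ (-α)) ≤
        8 * (2 * R) ^ (-α) * ∑' q : ℕ, ((q + 1 : ℕ) : ℝ) ^ (-α) ∧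
      (S.Nonempty →
        (2 * R / D) ^ α / (8 * ∑' q : ℕ, ((q + 1 : ℕ) : ℝ) ^ (-α)) ≤
          dist t u ^ (-α) / ∑ v ∈ S, dist v u ^ (-α)) :=
  stmt_8_general α R D hα hR hD u t ht htu S hS
end

section
/- Define an edge of the square lattice ℤ² to be an unordered pair of points of ℤ² at ℓ¹-distance 1, and define the pair of adjacent squares of an edge (squares identified by their lower-left corner in ℤ²) by: a horizontal edge {(x,y),(x+1,y)} has adjacent squares (x,y) and (x,y−1), and a vertical edge {(x,y),(x,y+1)} has adjacent squares (x,y) and (x−1,y). Then every finite set E of edges of ℤ² contains a subset O with |O| ≥ |E|/4 such that any two distinct edges of O have disjoint pairs of adjacent squares. -/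
/-- An element of `Sym2 (ℤ × ℤ)` is an edge of the square lattice `ℤ²`: an unordered pair
of lattice points at `ℓ¹`-distance `1`, i.e. of the form `{(x,y),(x+1,y)}` (horizontal) or
`{(x,y),(x,y+1)}` (vertical). -/
def IsLatticeEdge (e : Sym2 (ℤ × ℤ)) : Prop :=
  ∃ x y : ℤ, e = s((x, y), (x + 1, y)) ∨ e = s((x, y), (x, y + 1))

/-- `c` is one of the two adjacent squares of the lattice edge `e` (squares are identified
by their lower-left corners): a horizontal edge `{(x,y),(x+1,y)}` has adjacent squares
`(x,y)` and `(x,y-1)`, and a vertical edge `{(x,y),(x,y+1)}` has adjacent squares `(x,y)`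
and `(x-1,y)`. -/
def IsAdjSquare (e : Sym2 (ℤ × ℤ)) (c : ℤ × ℤ) : Prop :=
  (∃ x y : ℤ, e = s((x, y), (x + 1, y)) ∧ (c = (x, y) ∨ c = (x, y - 1))) ∨
  (∃ x y : ℤ, e = s((x, y), (x, y + 1)) ∧ (c = (x, y) ∨ c = (x - 1, y)))

/-- Classification of (potential) lattice edges into four classes: orientation and a parity. -/
def edgeCls (e : Sym2 (ℤ × ℤ)) : Bool × Bool :=
  Sym2.lift ⟨fun p q =>
    if p.1 = q.1 then (true, decide ((min p.1 q.1) % 2 = 0))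
    else (false, decide ((min p.2 q.2) % 2 = 0)), by
      intro p q
      simp only [min_comm]
      rcases eq_or_ne p.1 q.1 with h | h
      · simp [h]
      · simp [h, Ne.symm h]⟩ e

lemma edgeCls_H (x y : ℤ) : edgeCls s((x, y), (x + 1, y)) = (false, decide (y % 2 = 0)) := by
  have hx : (x : ℤ) ≠ x + 1 := by omega
  simp [edgeCls, hx]

lemma edgeCls_V (x y : ℤ) : edgeCls s((x, y), (x, y + 1)) = (true, decide (x % 2 = 0)) := by
  simp [edgeCls]

lemma key (e f : Sym2 (ℤ × ℤ)) (hc : edgeCls e = edgeCls f) (hne : e ≠ f) (c : ℤ × ℤ) :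
    ¬(IsAdjSquare e c ∧ IsAdjSquare f c) := by
  rintro ⟨(⟨x, y, he, hce⟩ | ⟨x, y, he, hce⟩), (⟨a, b, hf, hcf⟩ | ⟨a, b, hf, hcf⟩)⟩ <;>
    subst he <;> subst hf
  · rw [edgeCls_H, edgeCls_H] at hc
    have hpar : y % 2 = 0 ↔ b % 2 = 0 := by simpa using congrArg Prod.snd hc
    have hne' : ¬(x = a ∧ y = b) := by
      rintro ⟨rfl, rfl⟩; exact hne rfl
    rcases hce with rfl | rfl <;> rcases hcf with h | h <;>
      · rw [Prod.ext_iff] at h; omega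
  · rw [edgeCls_H, edgeCls_V] at hc
    simp at hc
  · rw [edgeCls_V, edgeCls_H] at hc
    simp at hc
  · rw [edgeCls_V, edgeCls_V] at hc
    have hpar : x % 2 = 0 ↔ a % 2 = 0 := by simpa using congrArg Prod.snd hc
    have hne' : ¬(x = a ∧ y = b) := by
      rintro ⟨rfl, rfl⟩; exact hne rfl
    rcases hce with rfl | rfl <;> rcases hcf with h | h <;>
      · rw [Prod.ext_iff] at h; omega

/-- Every finite set `E` of edges of the square lattice `ℤ²` contains a
subset `O` with `|O| ≥ |E|/4` such that any two distinct edges of `O` have disjoint pairs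
of adjacent squares. -/
theorem stmt_10 (E : Finset (Sym2 (ℤ × ℤ))) (hE : ∀ e ∈ E, IsLatticeEdge e) :
    ∃ O ⊆ E, E.card ≤ 4 * O.card ∧
      ∀ e ∈ O, ∀ f ∈ O, e ≠ f → ∀ c : ℤ × ℤ, ¬(IsAdjSquare e c ∧ IsAdjSquare f c) := by
  classical
  obtain ⟨i, -, hmax⟩ := Finset.exists_max_image (Finset.univ : Finset (Bool × Bool))
    (fun j => (E.filter (fun e => edgeCls e = j)).card) Finset.univ_nonempty
  refine ⟨E.filter (fun e => edgeCls e = i), Finset.filter_subset _ _, ?_, ?_⟩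
  · have hsum : ∑ j : Bool × Bool, (E.filter (fun e => edgeCls e = j)).card = E.card :=
      (Finset.card_eq_sum_card_fiberwise (fun e _ => Finset.mem_univ (edgeCls e))).symm
    calc E.card = ∑ j : Bool × Bool, (E.filter (fun e => edgeCls e = j)).card := hsum.symm
      _ ≤ ∑ _j : Bool × Bool, (E.filter (fun e => edgeCls e = i)).card :=
          Finset.sum_le_sum (fun j _ => hmax j (Finset.mem_univ j))
      _ = 4 * (E.filter (fun e => edgeCls e = i)).card := by simp [Finset.card_univ, mul_comm]
  · intro e he f hf hne c
    rw [Finset.mem_filter] at he hf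
    exact key e f (he.2.trans hf.2.symm) hne c
end
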